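/- Let x ∈ ℝⁿ and δ > 0. Suppose f : ℝⁿ → ℝ is differentiable with L-Lipschitz continuous gradient, m : ℝⁿ → ℝ is differentiable at x, |m(x+s) − m(x) − ⟨∇m(x), s⟩| ≤ ((κ_bmh − 1)/2)·‖s‖² for all s with ‖s‖ ≤ δ, and ‖∇m(x) − ∇f(x)‖ ≤ κ_grad·δ. Let φ : ℝⁿ → ℝ be arbitrary and let s ∈ ℝⁿ with ‖s‖ ≤ δ. Define ared := f(x) + φ(x) − f(x+s) − φ(x+s) and pred := m(x) + φ(x) − m(x+s) − φ(x+s). Then |ared − pred| ≤ 2·κ_val·δ² with κ_val := (L + κ_bmh + 2·κ_grad)/4; in particular, if pred ≥ 0 then −ared ≤ 2·κ_val·δ². -/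

import Mathlib

/-!
Both `f` and `m` are compared with their first-order Taylor expansions at `x`: the Lipschitz
gradient bounds the Taylor remainder of `f` by `L/2 ‖s‖²` (descent lemma), the hypothesis on `m`
bounds its remainder by `(κbmh - 1)/2 ‖s‖²`, and the gradients differ by at most `κgrad δ`.
Since `φ` cancels, `ared - pred` is the difference of the two remainders plus `⟪∇m x - ∇f x, s⟫`.
-/

open RealInnerProductSpace

variable {E : Type*} [NormedAddCommGroup E] [InnerProductSpace ℝ E] [CompleteSpace E]

theorem HasGradientAt.hasDerivAt_comp_add_smul {f : E → ℝ} {x s g : E} {t : ℝ}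
    (hf : HasGradientAt f g (x + t • s)) :
    HasDerivAt (fun t : ℝ => f (x + t • s)) ⟪g, s⟫ t := by
  have hline : HasDerivAt (fun t : ℝ => x + t • s) s t := by
    simpa using ((hasDerivAt_id t).smul_const s).const_add x
  exact hf.hasFDerivAt.comp_hasDerivAt t hline

theorem abs_sub_sub_inner_gradient_le_of_lipschitz {f : E → ℝ} {L : ℝ}
    (hf : Differentiable ℝ f) (hlip : ∀ a b : E, ‖gradient f b - gradient f a‖ ≤ L * ‖b - a‖)
    (x s : E) :
    |f (x + s) - f x - ⟪gradient f x, s⟫| ≤ L / 2 * ‖s‖ ^ 2 := by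
  set r : ℝ → ℝ := fun t => f (x + t • s) - f x - t * ⟪gradient f x, s⟫
  have hr : ∀ t, HasDerivAt r ⟪gradient f (x + t • s) - gradient f x, s⟫ t := fun t => by
    have h := (((hf (x + t • s)).hasGradientAt.hasDerivAt_comp_add_smul).sub_const (f x)).sub
      ((hasDerivAt_id t).mul_const ⟪gradient f x, s⟫)
    rwa [one_mul, ← inner_sub_left] at h
  have hr' : ∀ t ∈ Set.Ico (0 : ℝ) 1,
      ‖⟪gradient f (x + t • s) - gradient f x, s⟫‖ ≤ L * ‖s‖ ^ 2 * t := fun t ht =>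
    calc ‖⟪gradient f (x + t • s) - gradient f x, s⟫‖
        ≤ ‖gradient f (x + t • s) - gradient f x‖ * ‖s‖ := abs_real_inner_le_norm _ _
      _ ≤ L * ‖t • s‖ * ‖s‖ := by
          gcongr
          simpa using hlip x (x + t • s)
      _ = L * ‖s‖ ^ 2 * t := by rw [norm_smul, Real.norm_of_nonneg ht.1]; ring
  -- `r 0 = 0` and `|r'| ≤ B'`, so the comparison principle gives `|r 1| ≤ B 1 = L/2 ‖s‖²`.
  have hB : ∀ t : ℝ, HasDerivAt (fun t => L * ‖s‖ ^ 2 / 2 * t ^ 2) (L * ‖s‖ ^ 2 * t) t :=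
    fun t => ((hasDerivAt_pow 2 t).const_mul (L * ‖s‖ ^ 2 / 2)).congr_deriv (by ring)
  have hr1 := image_norm_le_of_norm_deriv_right_le_deriv_boundary
    (fun t _ => (hr t).continuousAt.continuousWithinAt) (fun t _ => (hr t).hasDerivWithinAt)
    (by simp [r]) hB hr' (Set.right_mem_Icc.2 zero_le_one)
  simp only [r, one_smul, one_mul, Real.norm_eq_abs] at hr1
  linarith

theorem stmt_4 {n : ℕ} (x : EuclideanSpace ℝ (Fin n)) (δ L κbmh κgrad : ℝ)
    (hL : 0 < L) (hκbmh : 1 ≤ κbmh)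
    (f m : EuclideanSpace ℝ (Fin n) → ℝ)
    (hf : Differentiable ℝ f)
    (hflip : ∀ a b : EuclideanSpace ℝ (Fin n),
      ‖gradient f b - gradient f a‖ ≤ L * ‖b - a‖)
    (hcurv : ∀ s : EuclideanSpace ℝ (Fin n), ‖s‖ ≤ δ →
      |m (x + s) - m x - ⟪gradient m x, s⟫| ≤ ((κbmh - 1) / 2) * ‖s‖ ^ 2)
    (hgrad : ‖gradient m x - gradient f x‖ ≤ κgrad * δ)
    (φ : EuclideanSpace ℝ (Fin n) → ℝ)
    (s : EuclideanSpace ℝ (Fin n)) (hs : ‖s‖ ≤ δ) :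
    |(f x + φ x - f (x + s) - φ (x + s)) - (m x + φ x - m (x + s) - φ (x + s))| ≤
        2 * ((L + κbmh + 2 * κgrad) / 4) * δ ^ 2 ∧
      (0 ≤ m x + φ x - m (x + s) - φ (x + s) →
        -(f x + φ x - f (x + s) - φ (x + s)) ≤
          2 * ((L + κbmh + 2 * κgrad) / 4) * δ ^ 2) := by
  have hsq : ‖s‖ ^ 2 ≤ δ ^ 2 := pow_le_pow_left₀ (norm_nonneg s) hs 2
  have hf_rem := (abs_sub_sub_inner_gradient_le_of_lipschitz hf hflip x s).trans
    (mul_le_mul_of_nonneg_left hsq (by positivity))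
  have hm_rem := (hcurv s hs).trans (mul_le_mul_of_nonneg_left hsq (by linarith))
  have hinner : |⟪gradient m x - gradient f x, s⟫| ≤ κgrad * δ * δ :=
    (abs_real_inner_le_norm _ _).trans
      (mul_le_mul hgrad hs (norm_nonneg s) ((norm_nonneg _).trans hgrad))
  have hsplit : (f x + φ x - f (x + s) - φ (x + s)) - (m x + φ x - m (x + s) - φ (x + s))
      = (m (x + s) - m x - ⟪gradient m x, s⟫) - (f (x + s) - f x - ⟪gradient f x, s⟫)
        + ⟪gradient m x - gradient f x, s⟫ := by
    rw [inner_sub_left]; ring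
  have hbound : |(f x + φ x - f (x + s) - φ (x + s)) - (m x + φ x - m (x + s) - φ (x + s))|
      ≤ 2 * ((L + κbmh + 2 * κgrad) / 4) * δ ^ 2 := by
    rw [hsplit]
    refine (abs_add_le _ _).trans ((add_le_add (abs_sub _ _) hinner).trans ?_)
    nlinarith
  exact ⟨hbound, fun _ => by linarith [(abs_le.mp hbound).1]⟩
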